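/- (Index formula from the proof of Theorem 1.) Assume W_m(n) ≠ 0 for every n ∈ ℕ₀ with n ≥ −m. Then the kernel of P(∂_z) on ℂ[[z]] has ℂ-dimension max(−m, 0), the cokernel ℂ[[z]]/im(P(∂_z)) has ℂ-dimension max(m, 0), and consequently the index χ(P(∂_z), ℂ[[z]]) := dim ker(P(∂_z)) − dim coker(P(∂_z)) equals −m. -/

import Mathlib

open PowerSeries

/-- Formal differentiation `∂_z` on `ℂ[[z]]` as a `ℂ`-linear map. -/
noncomputable def dz : PowerSeries ℂ →ₗ[ℂ] PowerSeries ℂ where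
  toFun u := PowerSeries.mk fun n => ((n : ℂ) + 1) * PowerSeries.coeff (n + 1) u
  map_add' u v := by
    ext n
    simp [mul_add]
  map_smul' c u := by
    ext n
    simp
    ring

/-- The order of vanishing at `0` of a formal power series. -/
noncomputable def ordz (g : PowerSeries ℂ) : ℕ := sInf {k : ℕ | PowerSeries.coeff k g ≠ 0}

/-- The operator `P(∂_z) u = Σ_{j∈Λ} a_j · ∂_z^j u`. -/
noncomputable def Pop (Λ : Finset ℕ) (a : ℕ → PowerSeries ℂ) :
    PowerSeries ℂ →ₗ[ℂ] PowerSeries ℂ :=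
  ∑ j ∈ Λ, (LinearMap.mulLeft ℂ (a j)).comp (dz ^ j)

/-- The characteristic polynomial `W_q` evaluated at a natural number `n`:
`W_q(n) = Σ_{j∈Λ, α_j−j=q} a_{j,j+q} · n(n−1)⋯(n−j+1)`. -/
noncomputable def W (Λ : Finset ℕ) (a : ℕ → PowerSeries ℂ) (q : ℤ) (n : ℕ) : ℂ :=
  ∑ j ∈ Λ.filter (fun j => (ordz (a j) : ℤ) - j = q),
    PowerSeries.coeff (ordz (a j)) (a j) * (n.descFactorial j : ℂ)

/-!
Put `d = max(-m, 0)` and `M = max(m, 0)`. Every coefficient of `P(∂_z) u` below `z^m` vanishes,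
and for `n ≥ d` the coefficient of `z^(n+m)` is `W_m(n) u_n` plus a linear combination of
`u_0, …, u_(n-1)`. Since `W_m(n) ≠ 0` for `n ≥ d`, this lower triangular system can be solved
recursively for any right-hand side once `u_0, …, u_(d-1)` are prescribed. Hence the kernel is
parametrised by its first `d` coefficients, and the image consists exactly of the series whose
first `M` coefficients vanish.
-/

open Finset

section TriangularSystem

variable {K : Type*} [Field K] {d : ℕ} {D : ℕ → K} (c : ℕ → ℕ → K)

theorem eq_of_triangular (hD : ∀ n, d ≤ n → D n ≠ 0) {u v : ℕ → K}
    (hlow : ∀ k < d, u k = v k)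
    (hrow : ∀ n, d ≤ n →
      D n * u n + ∑ k ∈ range n, c n k * u k = D n * v n + ∑ k ∈ range n, c n k * v k) :
    u = v := by
  funext n
  induction n using Nat.strong_induction_on with
  | _ n ih =>
    rcases lt_or_ge n d with hn | hn
    · exact hlow n hn
    · have hsum : ∑ k ∈ range n, c n k * u k = ∑ k ∈ range n, c n k * v k :=
        sum_congr rfl fun k hk => by rw [ih k (mem_range.mp hk)]
      have hdiag := hrow n hn
      rw [hsum, add_left_inj] at hdiag
      exact mul_left_cancel₀ (hD n hn) hdiag

theorem exists_triangular (hD : ∀ n, d ≤ n → D n ≠ 0) (w τ : ℕ → K) :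
    ∃ u : ℕ → K, (∀ k < d, u k = w k) ∧
      ∀ n, d ≤ n → D n * u n + ∑ k ∈ range n, c n k * u k = τ n := by
  let u : ℕ → K := Nat.strongRec fun n prev =>
    if n < d then w n else (τ n - ∑ k : Fin n, c n k * prev k k.isLt) / D n
  have hu : ∀ n, u n = if n < d then w n else (τ n - ∑ k ∈ range n, c n k * u k) / D n := by
    intro n
    rw [← Fin.sum_univ_eq_sum_range (fun k => c n k * u k)]
    exact Nat.strongRec_eq _ n
  refine ⟨u, fun k hk => by rw [hu, if_pos hk], fun n hn => ?_⟩
  rw [hu n, if_neg (not_lt.mpr hn), mul_div_cancel₀ _ (hD n hn), sub_add_cancel]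

end TriangularSystem

lemma coeff_eq_zero_of_lt_ordz {g : PowerSeries ℂ} {k : ℕ} (hk : k < ordz g) : coeff k g = 0 := by
  by_contra h
  exact (Nat.sInf_le h).not_gt hk

lemma coeff_dz (u : PowerSeries ℂ) (k : ℕ) : coeff k (dz u) = ((k : ℂ) + 1) * coeff (k + 1) u :=
  coeff_mk k fun n => ((n : ℂ) + 1) * coeff (n + 1) u

lemma coeff_dz_pow (j : ℕ) (u : PowerSeries ℂ) (k : ℕ) :
    coeff k ((dz ^ j) u) = ((k + j).descFactorial j : ℂ) * coeff (k + j) u := by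
  induction j generalizing u with
  | zero => simp
  | succ j ih =>
    rw [pow_succ, Module.End.mul_apply, ih, coeff_dz, ← add_assoc, Nat.succ_descFactorial_succ]
    push_cast
    ring

-- The guard stands in for `coeff (t + j - k) g` with an integer, possibly negative, index.
noncomputable def mulDzPowEntry (g : PowerSeries ℂ) (j t k : ℕ) : ℂ :=
  if k ≤ t + j then coeff (t + j - k) g * k.descFactorial j else 0

lemma coeff_mul_dz_pow (g u : PowerSeries ℂ) (j t : ℕ) :
    coeff t (g * (dz ^ j) u) = ∑ k ∈ range (t + j + 1), mulDzPowEntry g j t k * coeff k u := by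
  rw [← sum_range_add_sum_Ico _ (by omega : j ≤ t + j + 1), sum_Ico_eq_sum_range,
    show t + j + 1 - j = t + 1 by omega, coeff_mul,
    Nat.sum_antidiagonal_eq_sum_range_succ (fun p q => coeff p g * coeff q ((dz ^ j) u)),
    ← sum_range_reflect]
  have hlow : ∀ k ∈ range j, mulDzPowEntry g j t k * coeff k u = 0 := fun k hk => by
    rw [mulDzPowEntry, Nat.descFactorial_eq_zero_iff_lt.mpr (mem_range.mp hk)]
    simp
  rw [sum_eq_zero hlow, zero_add]
  refine sum_congr rfl fun q hq => ?_
  have hq : q < t + 1 := mem_range.mp hq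
  rw [mulDzPowEntry, if_pos (by omega), coeff_dz_pow, show t + 1 - 1 - q = t - q by omega,
    show t - (t - q) = q by omega, show t + j - (j + q) = t - q by omega, add_comm q j]
  ring

lemma mulDzPowEntry_eq_zero_of_lt {g : PowerSeries ℂ} {j t : ℕ} (h : t + j < ordz g) (k : ℕ) :
    mulDzPowEntry g j t k = 0 := by
  rw [mulDzPowEntry, coeff_eq_zero_of_lt_ordz (by omega : t + j - k < ordz g)]
  simp

lemma coeff_mul_dz_pow_of_le {g : PowerSeries ℂ} {j t n : ℕ} (h : t + j ≤ n + ordz g)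
    (u : PowerSeries ℂ) :
    coeff t (g * (dz ^ j) u) = ∑ k ∈ range (n + 1), mulDzPowEntry g j t k * coeff k u := by
  rw [coeff_mul_dz_pow]
  rcases le_total (t + j) n with hle | hle
  · refine sum_subset (range_subset_range.mpr (by omega)) fun k _ hk => ?_
    rw [mulDzPowEntry, if_neg (by simp only [mem_range] at hk; omega), zero_mul]
  · refine (sum_subset (range_subset_range.mpr (by omega)) fun k hk hk' => ?_).symm
    simp only [mem_range] at hk hk'
    rw [mulDzPowEntry, coeff_eq_zero_of_lt_ordz (by omega : t + j - k < ordz g)]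
    simp

noncomputable def popEntry (Λ : Finset ℕ) (a : ℕ → PowerSeries ℂ) (t k : ℕ) : ℂ :=
  ∑ j ∈ Λ, mulDzPowEntry (a j) j t k

section Pop

variable {Λ : Finset ℕ} {a : ℕ → PowerSeries ℂ}

lemma coeff_Pop_eq_zero {t : ℕ} (h : ∀ j ∈ Λ, t + j < ordz (a j)) (u : PowerSeries ℂ) :
    coeff t (Pop Λ a u) = 0 := by
  simp only [Pop, LinearMap.sum_apply, map_sum, LinearMap.comp_apply, LinearMap.mulLeft_apply,
    coeff_mul_dz_pow]
  exact sum_eq_zero fun j hj => sum_eq_zero fun k _ => by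
    rw [mulDzPowEntry_eq_zero_of_lt (h j hj), zero_mul]

lemma coeff_Pop {t n : ℕ} (h : ∀ j ∈ Λ, t + j ≤ n + ordz (a j)) (u : PowerSeries ℂ) :
    coeff t (Pop Λ a u) = ∑ k ∈ range (n + 1), popEntry Λ a t k * coeff k u := by
  simp only [Pop, LinearMap.sum_apply, map_sum, LinearMap.comp_apply, LinearMap.mulLeft_apply]
  rw [sum_congr rfl fun j hj => coeff_mul_dz_pow_of_le (h j hj) u, sum_comm]
  simp only [popEntry, sum_mul]

variable {m : ℤ} (hα : ∀ j ∈ Λ, m ≤ (ordz (a j) : ℤ) - j)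
include hα

lemma popEntry_diag {t n : ℕ} (htn : (t : ℤ) = n + m) : popEntry Λ a t n = W Λ a m n := by
  rw [popEntry, W, sum_filter]
  refine sum_congr rfl fun j hj => ?_
  have hαj := hα j hj
  rw [mulDzPowEntry]
  split_ifs with hle hord hord
  · rw [show t + j - n = ordz (a j) by omega]
  · rw [coeff_eq_zero_of_lt_ordz (by omega : t + j - n < ordz (a j)), zero_mul]
  · omega
  · rfl

lemma coeff_Pop_eq_zero_of_lt {t : ℕ} (ht : (t : ℤ) < m) (u : PowerSeries ℂ) :
    coeff t (Pop Λ a u) = 0 :=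
  coeff_Pop_eq_zero (fun j hj => by have := hα j hj; omega) u

lemma coeff_Pop_eq_W_mul_add {t n : ℕ} (htn : (t : ℤ) = n + m) (u : PowerSeries ℂ) :
    coeff t (Pop Λ a u) =
      W Λ a m n * coeff n u + ∑ k ∈ range n, popEntry Λ a t k * coeff k u := by
  rw [coeff_Pop (n := n) (fun j hj => by have := hα j hj; omega), sum_range_succ,
    popEntry_diag hα htn, add_comm]

end Pop

noncomputable def firstCoeffs (n : ℕ) : PowerSeries ℂ →ₗ[ℂ] (Fin n → ℂ) :=
  LinearMap.pi fun i => coeff (i : ℕ)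

lemma firstCoeffs_surjective (n : ℕ) : Function.Surjective (firstCoeffs n) := fun w =>
  ⟨mk fun k => if h : k < n then w ⟨k, h⟩ else 0, funext fun i => by simp [firstCoeffs]⟩

section Index

variable {Λ : Finset ℕ} {a : ℕ → PowerSeries ℂ} {m : ℤ}
  (hα : ∀ j ∈ Λ, m ≤ (ordz (a j) : ℤ) - j)
include hα

lemma Pop_eq_iff (u v : PowerSeries ℂ) :
    Pop Λ a u = v ↔ (∀ t : ℕ, (t : ℤ) < m → coeff t v = 0) ∧
      ∀ n, (-m).toNat ≤ n → W Λ a m n * coeff n u +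
        ∑ k ∈ range n, popEntry Λ a (n + m).toNat k * coeff k u = coeff (n + m).toNat v := by
  constructor
  · rintro rfl
    exact ⟨fun t ht => coeff_Pop_eq_zero_of_lt hα ht u,
      fun n hn => (coeff_Pop_eq_W_mul_add hα (n := n) (by omega) u).symm⟩
  · rintro ⟨hlow, hrow⟩
    ext t
    by_cases ht : (t : ℤ) < m
    · rw [coeff_Pop_eq_zero_of_lt hα ht, hlow t ht]
    · obtain ⟨n, hn, rfl⟩ : ∃ n : ℕ, (-m).toNat ≤ n ∧ t = (n + m).toNat :=
        ⟨(t - m).toNat, by omega, by omega⟩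
      rw [← hrow n hn, coeff_Pop_eq_W_mul_add hα (n := n) (by omega)]

variable (hW : ∀ n, (-m).toNat ≤ n → W Λ a m n ≠ 0)
include hW

lemma range_Pop : LinearMap.range (Pop Λ a) = LinearMap.ker (firstCoeffs m.toNat) := by
  ext v
  rw [LinearMap.mem_range, LinearMap.mem_ker]
  constructor
  · rintro ⟨u, rfl⟩
    exact funext fun i => coeff_Pop_eq_zero_of_lt hα (t := i) (by omega) u
  · intro hv
    obtain ⟨u, -, hu⟩ := exists_triangular (fun n k => popEntry Λ a (n + m).toNat k)
      hW 0 fun n => coeff (n + m).toNat v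
    refine ⟨mk u, (Pop_eq_iff hα _ _).2 ⟨fun t ht => ?_, fun n hn => by simpa using hu n hn⟩⟩
    exact congrFun hv ⟨t, by omega⟩

lemma bijective_firstCoeffs_ker_Pop :
    Function.Bijective (firstCoeffs (-m).toNat ∘ₗ (LinearMap.ker (Pop Λ a)).subtype) := by
  constructor
  · rintro ⟨u, hu⟩ ⟨v, hv⟩ huv
    have hrow (x : PowerSeries ℂ) (hx : Pop Λ a x = 0) := ((Pop_eq_iff hα x 0).1 hx).2
    have hcoeff := eq_of_triangular (fun n k => popEntry Λ a (n + m).toNat k) hW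
      (u := fun k => coeff k u) (v := fun k => coeff k v)
      (fun k hk => congrFun huv ⟨k, hk⟩)
      (fun n hn => by rw [hrow u hu n hn, hrow v hv n hn])
    exact Subtype.ext (PowerSeries.ext (congrFun hcoeff))
  · intro w
    obtain ⟨u, hlow, hrow⟩ := exists_triangular (fun n k => popEntry Λ a (n + m).toNat k) hW
      (fun k => if h : k < (-m).toNat then w ⟨k, h⟩ else 0) 0
    refine ⟨⟨mk u, (Pop_eq_iff hα _ _).2 ⟨by simp, by simpa using hrow⟩⟩, funext fun i => ?_⟩
    simp only [firstCoeffs, LinearMap.comp_apply, LinearMap.pi_apply, Submodule.subtype_apply,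
      coeff_mk]
    rw [hlow i i.isLt, dif_pos i.isLt]

end Index

theorem statement3_general (Λ : Finset ℕ) (hΛ : Λ.Nonempty) (a : ℕ → PowerSeries ℂ)
    (m : ℤ) (hm : m = Λ.inf' hΛ (fun j => (ordz (a j) : ℤ) - j))
    (hW : ∀ n : ℕ, -m ≤ (n : ℤ) → W Λ a m n ≠ 0) :
    FiniteDimensional ℂ (LinearMap.ker (Pop Λ a)) ∧
    FiniteDimensional ℂ (PowerSeries ℂ ⧸ LinearMap.range (Pop Λ a)) ∧
    (Module.finrank ℂ (LinearMap.ker (Pop Λ a)) : ℤ) = max (-m) 0 ∧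
    (Module.finrank ℂ (PowerSeries ℂ ⧸ LinearMap.range (Pop Λ a)) : ℤ) = max m 0 ∧
    (Module.finrank ℂ (LinearMap.ker (Pop Λ a)) : ℤ)
      - (Module.finrank ℂ (PowerSeries ℂ ⧸ LinearMap.range (Pop Λ a)) : ℤ) = -m := by
  have hα : ∀ j ∈ Λ, m ≤ (ordz (a j) : ℤ) - j := fun j hj => hm ▸ inf'_le _ hj
  have hW' : ∀ n, (-m).toNat ≤ n → W Λ a m n ≠ 0 := fun n hn => hW n (by omega)
  let eKer := LinearEquiv.ofBijective _ (bijective_firstCoeffs_ker_Pop hα hW')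
  let eCoker := (Submodule.quotEquivOfEq _ _ (range_Pop hα hW')).trans
    ((firstCoeffs m.toNat).quotKerEquivOfSurjective (firstCoeffs_surjective _))
  have hker := eKer.finrank_eq
  have hcoker := eCoker.finrank_eq
  rw [Module.finrank_fin_fun] at hker hcoker
  refine ⟨Module.Finite.equiv eKer.symm, Module.Finite.equiv eCoker.symm, ?_, ?_, ?_⟩ <;> omega

/-- Index formula from the proof of Theorem 1: if `W_m(n) ≠ 0` for every `n ∈ ℕ₀` with
`n ≥ −m`, then `dim ker P(∂_z) = max(−m,0)`, `dim coker P(∂_z) = max(m,0)`, and the index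
`χ(P(∂_z),ℂ[[z]]) = dim ker − dim coker` equals `−m`. -/
theorem statement3 (Λ : Finset ℕ) (hΛ : Λ.Nonempty) (a : ℕ → PowerSeries ℂ)
    (ha : ∀ j ∈ Λ, a j ≠ 0)
    (m : ℤ) (hm : m = Λ.inf' hΛ (fun j => (ordz (a j) : ℤ) - j))
    (hW : ∀ n : ℕ, -m ≤ (n : ℤ) → W Λ a m n ≠ 0) :
    FiniteDimensional ℂ (LinearMap.ker (Pop Λ a)) ∧
    FiniteDimensional ℂ (PowerSeries ℂ ⧸ LinearMap.range (Pop Λ a)) ∧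
    (Module.finrank ℂ (LinearMap.ker (Pop Λ a)) : ℤ) = max (-m) 0 ∧
    (Module.finrank ℂ (PowerSeries ℂ ⧸ LinearMap.range (Pop Λ a)) : ℤ) = max m 0 ∧
    (Module.finrank ℂ (LinearMap.ker (Pop Λ a)) : ℤ)
      - (Module.finrank ℂ (PowerSeries ℂ ⧸ LinearMap.range (Pop Λ a)) : ℤ) = -m :=
  statement3_general Λ hΛ a m hm hW
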